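/- (Schur majorisation for marginals) Let ω̄ be a diagonal density matrix on (ℂ^d)^{⊗n}, V a unitary, μ = V ω̄ V†, and ρ = tr_{2..n}(μ) the first marginal. Let ω̄₀^↓ be the diagonal d×d matrix obtained by sorting the eigenvalues of ω̄ in decreasing order, arranging them as a diagonal matrix on (ℂ^d)^{⊗n} with decreasing entries in lexicographic position order, and taking the first marginal. Then the eigenvalue vector of ρ is majorised by the diagonal of ω̄₀^↓. -/

import Mathlib

open Finset Matrix

/-- The entries of `x` sorted in decreasing order. -/
noncomputable def sortDesc {n : ℕ} (x : Fin n → ℝ) : Fin n → ℝ :=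
  fun i => x (Tuple.sort x i.rev)

/-- Sum of the `k` largest entries of `x`. -/
noncomputable def topSum {n : ℕ} (x : Fin n → ℝ) (k : ℕ) : ℝ :=
  ∑ i ∈ Finset.univ.filter (fun i : Fin n => (i : ℕ) < k), sortDesc x i

/-- `y` is majorised by `x`. -/
def Majorizes {n : ℕ} (y x : Fin n → ℝ) : Prop :=
  (∀ k : ℕ, topSum y k ≤ topSum x k) ∧ (∑ i, y i = ∑ i, x i)

/-- Partial trace over all tensor factors except the first one. -/
noncomputable def marginal0 {d n : ℕ}
    (A : Matrix (Fin (n + 1) → Fin d) (Fin (n + 1) → Fin d) ℂ) :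
    Matrix (Fin d) (Fin d) ℂ :=
  fun i j => ∑ f : Fin (n + 1) → Fin d,
    if f 0 = i then A f (Function.update f 0 j) else 0

/-!
Let `U` diagonalise `ρ`. Then `W = (U ⊗ 1)ᴴ V` is unitary and
`λ_a(ρ) = ∑_g (W ω̄ Wᴴ)_{(a,g),(a,g)}`, so the sum of any `k` eigenvalues of `ρ` is a sum of
`k d^n` diagonal entries of a unitary conjugate of `ω̄`. These entries are averages of the eigenvalues of `ω̄` under the doubly
stochastic matrix `|W_{ph}|²`, so their sum is at most the sum of the `k d^n` largest
eigenvalues of `ω̄`, which is the sum of the first `k` diagonal entries of `ω̄₀^↓`.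
-/

open scoped Kronecker

section TopSum

variable {N : ℕ}

noncomputable def sortPerm (x : Fin N → ℝ) : Equiv.Perm (Fin N) :=
  Fin.revPerm.trans (Tuple.sort x)

lemma sum_sortDesc (x : Fin N → ℝ) : ∑ i, sortDesc x i = ∑ i, x i :=
  Equiv.sum_comp (sortPerm x) x

lemma sortDesc_antitone (x : Fin N → ℝ) : Antitone (sortDesc x) :=
  fun _ _ hij => Tuple.monotone_sort x (Fin.rev_le_rev.mpr hij)

lemma topSum_of_le (x : Fin N → ℝ) {k : ℕ} (hk : N ≤ k) : topSum x k = ∑ i, x i := by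
  rw [topSum, Finset.filter_true_of_mem fun i _ => i.isLt.trans_le hk, sum_sortDesc]

lemma exists_card_le_topSum_eq_sum (x : Fin N → ℝ) (k : ℕ) :
    ∃ S : Finset (Fin N), #S ≤ k ∧ topSum x k = ∑ i ∈ S, x i := by
  refine ⟨(univ.filter fun i : Fin N => (i : ℕ) < k).map (sortPerm x).toEmbedding, ?_, ?_⟩
  · rw [card_map]
    simp [Fin.card_filter_val_lt]
  · rw [topSum, sum_map]
    rfl

lemma sum_mul_le_sum_of_threshold {ι : Type*} [Fintype ι] [DecidableEq ι] (A : Finset ι)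
    (v c : ι → ℝ) {t : ℝ} (ht : 0 ≤ t) (hA : ∀ i ∈ A, t ≤ v i) (hAc : ∀ i ∉ A, v i ≤ t)
    (hc0 : ∀ i, 0 ≤ c i) (hc1 : ∀ i, c i ≤ 1) (hc : ∑ i, c i ≤ #A) :
    ∑ i, c i * v i ≤ ∑ i ∈ A, v i := by
  have hpoint : ∀ i,
      c i * v i ≤ (if i ∈ A then v i else 0) + (c i - if i ∈ A then 1 else 0) * t := by
    intro i
    split_ifs with hi
    · nlinarith [hA i hi, hc1 i]
    · nlinarith [hAc i hi, hc0 i]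
  calc ∑ i, c i * v i
      ≤ ∑ i, ((if i ∈ A then v i else 0) + (c i - if i ∈ A then 1 else 0) * t) :=
        sum_le_sum fun i _ => hpoint i
    _ = ∑ i ∈ A, v i + (∑ i, c i - #A) * t := by
        simp [sum_add_distrib, sum_sub_distrib, ← sum_mul, sum_ite_mem]
    _ ≤ ∑ i ∈ A, v i := by nlinarith

lemma sum_mul_le_topSum (w c : Fin N → ℝ) (hw : ∀ i, 0 ≤ w i) (hc0 : ∀ i, 0 ≤ c i)
    (hc1 : ∀ i, c i ≤ 1) {m : ℕ} (hcm : ∑ i, c i ≤ m) : ∑ i, c i * w i ≤ topSum w m := by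
  rcases le_or_gt N m with hNm | hmN
  · rw [topSum_of_le w hNm]
    exact sum_le_sum fun i _ => mul_le_of_le_one_left (hw i) (hc1 i)
  set A := univ.filter fun i : Fin N => (i : ℕ) < m
  have hA : #A = m := by simp [A, Fin.card_filter_val_lt, hmN.le]
  have hsort : ∑ i, c i * w i = ∑ i, c (sortPerm w i) * sortDesc w i :=
    (Equiv.sum_comp (sortPerm w) fun i => c i * w i).symm
  rw [hsort, topSum]
  refine sum_mul_le_sum_of_threshold A (sortDesc w) _ (t := sortDesc w ⟨m, hmN⟩) (hw _)
    (fun i hi => ?_) (fun i hi => ?_)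
    (fun i => hc0 _) (fun i => hc1 _) (by rwa [Equiv.sum_comp (sortPerm w) c, hA])
  all_goals simp only [A, mem_filter, mem_univ, true_and, not_lt] at hi
  · exact sortDesc_antitone w (Fin.mk_le_mk.mpr hi.le : i ≤ ⟨m, hmN⟩)
  · exact sortDesc_antitone w (Fin.mk_le_mk.mpr hi : (⟨m, hmN⟩ : Fin N) ≤ i)

lemma sum_le_topSum (x : Fin N → ℝ) (hx : ∀ i, 0 ≤ x i) (S : Finset (Fin N)) {m : ℕ}
    (hS : #S ≤ m) : ∑ i ∈ S, x i ≤ topSum x m := by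
  have h := sum_mul_le_topSum x (fun i => if i ∈ S then 1 else 0) hx
    (fun i => by positivity) (fun i => by split_ifs <;> norm_num)
    (by simpa [sum_ite_mem] using hS)
  simpa [ite_mul, sum_ite_mem] using h

/-- For `b = d ^ n` this is the diagonal of `ω̄₀^↓`. -/
noncomputable def sortedBlockSums (d b : ℕ) (x : Fin N → ℝ) (j : Fin d) : ℝ :=
  ∑ i ∈ univ.filter (fun i : Fin N => (i : ℕ) / b = j), sortDesc x i

lemma topSum_mul_eq_sum_sortedBlockSums (x : Fin N → ℝ) {b d : ℕ} (hN : N ≤ b * d) (k : ℕ) :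
    topSum x (k * b) = ∑ j ∈ univ.filter (fun j : Fin d => (j : ℕ) < k),
      sortedBlockSums d b x j := by
  let block : Fin N → Fin d := fun i => ⟨i / b, Nat.div_lt_of_lt_mul (i.isLt.trans_le hN)⟩
  have hblock : ∀ (i : Fin N) (j : Fin d), (i : ℕ) / b = j ↔ block i = j := by
    simp [block, Fin.ext_iff]
  simp_rw [sortedBlockSums, hblock, sum_fiberwise_eq_sum_filter, topSum]
  congr 1
  ext i
  have hb : 0 < b := Nat.pos_of_ne_zero fun hb => by
    have := i.isLt.trans_le hN
    simp [hb] at this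
  simp [block, Nat.div_lt_iff_lt_mul hb]

lemma majorizes_sortedBlockSums {d b : ℕ} (x : Fin d → ℝ) (y : Fin N → ℝ)
    (hy : ∀ i, 0 ≤ y i) (hN : N ≤ b * d)
    (hx : ∀ (S : Finset (Fin d)) (k : ℕ), #S ≤ k → ∑ a ∈ S, x a ≤ topSum y (k * b))
    (hsum : ∑ a, x a = ∑ i, y i) :
    Majorizes x (sortedBlockSums d b y) := by
  have hblock0 : ∀ j, 0 ≤ sortedBlockSums d b y j := fun j => sum_nonneg fun i _ => hy _
  refine ⟨fun k => ?_, ?_⟩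
  · obtain ⟨S, hSk, hS⟩ := exists_card_le_topSum_eq_sum x k
    calc topSum x k = ∑ a ∈ S, x a := hS
      _ ≤ topSum y (k * b) := hx S k hSk
      _ = ∑ j ∈ univ.filter (fun j : Fin d => (j : ℕ) < k), sortedBlockSums d b y j :=
        topSum_mul_eq_sum_sortedBlockSums y hN k
      _ ≤ topSum (sortedBlockSums d b y) k :=
        sum_le_topSum _ hblock0 _ (by simp [Fin.card_filter_val_lt])
  · rw [hsum, ← topSum_of_le y (hN.trans_eq (mul_comm b d)),
      topSum_mul_eq_sum_sortedBlockSums y hN]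
    exact sum_congr (filter_true_of_mem fun j _ => j.isLt) fun _ _ => rfl

end TopSum

section Unitary

variable {ι : Type*} [Fintype ι] [DecidableEq ι] {W : Matrix ι ι ℂ}

lemma sum_normSq_row_of_mem_unitaryGroup (hW : W ∈ unitaryGroup ι ℂ) (p : ι) :
    ∑ h, Complex.normSq (W p h) = 1 := by
  have h := congr_fun₂ hW.2 p p
  simp only [mul_apply, star_apply, one_apply_eq, Complex.star_def, Complex.mul_conj] at h
  exact_mod_cast h

lemma sum_normSq_col_of_mem_unitaryGroup (hW : W ∈ unitaryGroup ι ℂ) (h : ι) :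
    ∑ p, Complex.normSq (W p h) = 1 := by
  have h := congr_fun₂ hW.1 h h
  simp only [mul_apply, star_apply, one_apply_eq, Complex.star_def,
    ← Complex.normSq_eq_conj_mul_self] at h
  exact_mod_cast h

lemma mul_diagonal_mul_conjTranspose_apply_self (W : Matrix ι ι ℂ) (w : ι → ℝ) (p : ι) :
    (W * diagonal (fun h => (w h : ℂ)) * Wᴴ) p p
      = ((∑ h, w h * Complex.normSq (W p h) : ℝ) : ℂ) := by
  rw [mul_apply]
  push_cast
  simp only [mul_diagonal, conjTranspose_apply, Complex.star_def]
  refine sum_congr rfl fun h _ => ?_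
  rw [← Complex.mul_conj]
  ring

lemma sum_diag_mul_diagonal_mul_conjTranspose (hW : W ∈ unitaryGroup ι ℂ) (w : ι → ℝ) :
    ∑ p, ((W * diagonal (fun h => (w h : ℂ)) * Wᴴ) p p).re = ∑ h, w h := by
  simp only [mul_diagonal_mul_conjTranspose_apply_self, Complex.ofReal_re]
  rw [sum_comm]
  simp [← mul_sum, sum_normSq_col_of_mem_unitaryGroup hW]

/-- Schur: the diagonal of `W diag(w) Wᴴ` is `w` averaged by the doubly stochastic matrix
`|W p h|²`. -/
lemma sum_diag_mul_diagonal_mul_conjTranspose_le_topSum {N : ℕ} (e : ι ≃ Fin N)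
    (hW : W ∈ unitaryGroup ι ℂ) (w : ι → ℝ) (hw : ∀ h, 0 ≤ w h) (F : Finset ι) {m : ℕ}
    (hF : #F ≤ m) :
    ∑ p ∈ F, ((W * diagonal (fun h => (w h : ℂ)) * Wᴴ) p p).re ≤ topSum (w ∘ e.symm) m := by
  set c : ι → ℝ := fun h => ∑ p ∈ F, Complex.normSq (W p h)
  have hc0 : ∀ h, 0 ≤ c h := fun h => sum_nonneg fun p _ => Complex.normSq_nonneg _
  have hc1 : ∀ h, c h ≤ 1 := fun h =>
    sum_normSq_col_of_mem_unitaryGroup hW h ▸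
      sum_le_sum_of_subset_of_nonneg (subset_univ F) fun p _ _ => Complex.normSq_nonneg _
  have hcsum : ∑ h, c h = #F := by
    rw [sum_comm]
    simp [sum_normSq_row_of_mem_unitaryGroup hW]
  calc ∑ p ∈ F, ((W * diagonal (fun h => (w h : ℂ)) * Wᴴ) p p).re
      = ∑ h, c h * w h := by
        simp only [mul_diagonal_mul_conjTranspose_apply_self, Complex.ofReal_re, c, sum_mul]
        rw [sum_comm]
        exact sum_congr rfl fun _ _ => sum_congr rfl fun _ _ => mul_comm _ _
    _ = ∑ i, c (e.symm i) * w (e.symm i) := (Equiv.sum_comp e.symm fun h => c h * w h).symm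
    _ ≤ topSum (w ∘ e.symm) m :=
        sum_mul_le_topSum _ _ (fun i => hw _) (fun i => hc0 _) (fun i => hc1 _)
          (by rw [Equiv.sum_comp e.symm c, hcsum]; exact_mod_cast hF)

end Unitary

lemma submatrix_mem_unitaryGroup {m o α : Type*} [Fintype m] [DecidableEq m] [Fintype o]
    [DecidableEq o] [CommRing α] [StarRing α] {U : Matrix o o α} (e : m ≃ o)
    (hU : U ∈ unitaryGroup o α) : U.submatrix e e ∈ unitaryGroup m α := by
  rw [mem_unitaryGroup_iff, star_eq_conjTranspose, conjTranspose_submatrix, submatrix_mul_equiv,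
    ← star_eq_conjTranspose, hU.2, submatrix_one_equiv]

section PartialTrace

variable {m o R : Type*} [Fintype o]

def traceRight [AddCommMonoid R] (M : Matrix (m × o) (m × o) R) : Matrix m m R :=
  fun i j => ∑ g, M (i, g) (j, g)

lemma sum_traceRight_diag [AddCommMonoid R] (M : Matrix (m × o) (m × o) R) (S : Finset m) :
    ∑ a ∈ S, traceRight M a a = ∑ p ∈ S ×ˢ univ, M p p :=
  (sum_product S univ fun p => M p p).symm

lemma traceRight_conj_kronecker_one [Fintype m] [DecidableEq o] [CommRing R] [StarRing R]
    (U : Matrix m m R) (M : Matrix (m × o) (m × o) R) :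
    traceRight ((U ⊗ₖ (1 : Matrix o o R))ᴴ * M * (U ⊗ₖ 1)) = Uᴴ * traceRight M * U := by
  ext a b
  simp only [traceRight, mul_apply, conjTranspose_apply, kroneckerMap_apply, one_apply, mul_ite,
    mul_one, mul_zero, apply_ite star, star_zero, ite_mul, zero_mul, Fintype.sum_prod_type,
    sum_ite_eq', mem_univ, if_true, sum_mul, mul_sum]
  rw [sum_comm]
  exact sum_congr rfl fun _ _ => sum_comm

end PartialTrace

lemma marginal0_eq_traceRight {d n : ℕ}
    (A : Matrix (Fin (n + 1) → Fin d) (Fin (n + 1) → Fin d) ℂ) :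
    marginal0 A = traceRight (A.submatrix (Fin.consEquiv fun _ => Fin d)
      (Fin.consEquiv fun _ => Fin d)) := by
  ext i j
  rw [marginal0, ← (Fin.consEquiv fun _ => Fin d).sum_comp, Fintype.sum_prod_type]
  simp only [traceRight, submatrix_apply, Fin.consEquiv_apply, Fin.cons_zero, sum_ite_irrel,
    sum_const_zero, sum_ite_eq', mem_univ, if_true]
  exact sum_congr rfl fun g _ => congrArg _ (Fin.update_cons_zero ..)

lemma submatrix_mul_diagonal_mul_conjTranspose {m o α : Type*} [Fintype m] [Fintype o]
    [DecidableEq m] [DecidableEq o] [Semiring α] [StarRing α] (V : Matrix o o α) (w : o → α)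
    (e : m ≃ o) :
    (V * diagonal w * Vᴴ).submatrix e e
      = V.submatrix e e * diagonal (w ∘ e) * (V.submatrix e e)ᴴ := by
  rw [conjTranspose_submatrix, ← submatrix_diagonal_equiv, submatrix_mul_equiv, submatrix_mul_equiv]

lemma exists_unitary_sum_eigenvalues_marginal0_eq {d n : ℕ} (w : (Fin (n + 1) → Fin d) → ℝ)
    {V : Matrix (Fin (n + 1) → Fin d) (Fin (n + 1) → Fin d) ℂ}
    (hV : V ∈ unitaryGroup (Fin (n + 1) → Fin d) ℂ)
    (hρ : (marginal0 (V * diagonal (fun f => (w f : ℂ)) * Vᴴ)).IsHermitian) :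
    ∃ W ∈ unitaryGroup (Fin d × (Fin n → Fin d)) ℂ, ∀ S : Finset (Fin d),
      ∑ a ∈ S, hρ.eigenvalues a = ∑ p ∈ S ×ˢ univ,
        ((W * diagonal (fun p => (w (Fin.consEquiv (fun _ => Fin d) p) : ℂ)) * Wᴴ) p p).re := by
  set e := Fin.consEquiv fun _ : Fin (n + 1) => Fin d
  set U : Matrix (Fin d) (Fin d) ℂ := (hρ.eigenvectorUnitary : Matrix (Fin d) (Fin d) ℂ)
  have hspec : Uᴴ * marginal0 (V * diagonal (fun f => (w f : ℂ)) * Vᴴ) * U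
      = diagonal (RCLike.ofReal ∘ hρ.eigenvalues) := by
    rw [← hρ.conjStarAlgAut_star_eigenvectorUnitary, Unitary.conjStarAlgAut_star_apply,
      star_eq_conjTranspose]
  set W := (U ⊗ₖ (1 : Matrix (Fin n → Fin d) (Fin n → Fin d) ℂ))ᴴ * V.submatrix e e
  set μ := W * diagonal (fun p => (w (e p) : ℂ)) * Wᴴ
  have hconj : Uᴴ * marginal0 (V * diagonal (fun f => (w f : ℂ)) * Vᴴ) * U = traceRight μ := by
    rw [marginal0_eq_traceRight, submatrix_mul_diagonal_mul_conjTranspose,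
      ← traceRight_conj_kronecker_one]
    simp only [μ, W, conjTranspose_mul, conjTranspose_conjTranspose, Matrix.mul_assoc,
      Function.comp_def]
    rfl
  refine ⟨W, mul_mem (Unitary.star_mem (kronecker_mem_unitary hρ.eigenvectorUnitary.2
    (one_mem _))) (submatrix_mem_unitaryGroup e hV), fun S => ?_⟩
  have hev : ∀ a, hρ.eigenvalues a = (traceRight μ a a).re := fun a => by
    simp [← hconj, hspec]
  simp only [hev, ← Complex.re_sum, sum_traceRight_diag]
  rfl

theorem marginal_majorised_by_sorted_blocks_general {d n : ℕ}
    (w : (Fin (n + 1) → Fin d) → ℝ) (hw0 : ∀ f, 0 ≤ w f)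
    (V : Matrix (Fin (n + 1) → Fin d) (Fin (n + 1) → Fin d) ℂ)
    (hV : V ∈ Matrix.unitaryGroup (Fin (n + 1) → Fin d) ℂ)
    (ρ : Matrix (Fin d) (Fin d) ℂ)
    (hρdef : ρ = marginal0 (V * Matrix.diagonal (fun f => (w f : ℂ)) * Vᴴ))
    (hρ : ρ.IsHermitian)
    (lam : Fin (d ^ (n + 1)) → ℝ) (hlam : lam = w ∘ finFunctionFinEquiv.symm)
    (q : Fin d → ℝ)
    (hq : ∀ j : Fin d, q j = ∑ i ∈ Finset.univ.filter
        (fun i : Fin (d ^ (n + 1)) => (i : ℕ) / d ^ n = (j : ℕ)), sortDesc lam i) :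
    Majorizes hρ.eigenvalues q := by
  subst hρdef hlam
  obtain ⟨W, hW, heig⟩ := exists_unitary_sum_eigenvalues_marginal0_eq w hV hρ
  set e := (Fin.consEquiv fun _ : Fin (n + 1) => Fin d).trans finFunctionFinEquiv
  have hwe : w ∘ finFunctionFinEquiv.symm = (fun p => w (Fin.consEquiv _ p)) ∘ e.symm := by
    ext i
    simp only [Function.comp_apply, e, Equiv.symm_trans_apply, Equiv.apply_symm_apply]
  rw [show q = sortedBlockSums d (d ^ n) (w ∘ finFunctionFinEquiv.symm) from funext hq]
  refine majorizes_sortedBlockSums _ _ (fun _ => hw0 _) (pow_succ d n).le (fun S k hSk => ?_) ?_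
  · rw [heig, hwe]
    refine sum_diag_mul_diagonal_mul_conjTranspose_le_topSum e hW _ (fun _ => hw0 _) _ ?_
    simpa using Nat.mul_le_mul_right (d ^ n) hSk
  · rw [heig, univ_product_univ, sum_diag_mul_diagonal_mul_conjTranspose hW,
      (Fin.consEquiv fun _ => Fin d).sum_comp w]
    exact (finFunctionFinEquiv.symm.sum_comp w).symm

/-- Schur majorisation for marginals: for a diagonal density matrix `ω̄` on
`(ℂ^d)^{⊗(n+1)}`, a unitary `V`, and `ρ` the first marginal of `μ = V ω̄ Vᴴ`, the
eigenvalue vector of `ρ` is majorised by the diagonal of `ω̄₀^↓`, whose `j`-th entry is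
the sum of the `j`-th consecutive block of `d^n` sorted eigenvalues of `ω̄`. -/
theorem marginal_majorised_by_sorted_blocks {d n : ℕ}
    (w : (Fin (n + 1) → Fin d) → ℝ) (hw0 : ∀ f, 0 ≤ w f) (hw1 : ∑ f, w f = 1)
    (V : Matrix (Fin (n + 1) → Fin d) (Fin (n + 1) → Fin d) ℂ)
    (hV : V ∈ Matrix.unitaryGroup (Fin (n + 1) → Fin d) ℂ)
    (ρ : Matrix (Fin d) (Fin d) ℂ)
    (hρdef : ρ = marginal0 (V * Matrix.diagonal (fun f => (w f : ℂ)) * Vᴴ))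
    (hρ : ρ.IsHermitian)
    (lam : Fin (d ^ (n + 1)) → ℝ) (hlam : lam = w ∘ finFunctionFinEquiv.symm)
    (q : Fin d → ℝ)
    (hq : ∀ j : Fin d, q j = ∑ i ∈ Finset.univ.filter
        (fun i : Fin (d ^ (n + 1)) => (i : ℕ) / d ^ n = (j : ℕ)), sortDesc lam i) :
    Majorizes hρ.eigenvalues q :=
  marginal_majorised_by_sorted_blocks_general w hw0 V hV ρ hρdef hρ lam hlam q hq
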